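/- arXiv:1311.0706 — 2 statements merged into one kernel-verified Lean document; each statement's English description precedes it below -/
import Mathlib

section
/- Let m, n, p be positive integers. Then, as real numbers, the double sum ∑_{l=0}^{m} ∑_{k=0}^{n} C(m,l) · C(n,k) · n^{m-l-1} · m^{n-k-1} · (km + nl - kl) · p^{l+k-1} equals (m+p)^{n-1} · (n+p)^{m-1} · (m+n+p), where the exponents m-l-1, n-k-1 and l+k-1 are integer exponents (possibly equal to -1) and C(a,b) denotes the binomial coefficient. -/
/-!
Multiplying by `m n p` makes every exponent a natural number. Since
`k m + n l - k l = (m - l) k + l n`, the double sum then factors into two products of single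
binomial sums, each of the form `∑ C(N, j) x ^ j y ^ (N - j)` weighted by `j` or `N - j`, and these
are `N x (x + y) ^ (N - 1)` and `N y (x + y) ^ (N - 1)` (the derivative of the binomial theorem).
-/

open Finset

section Binomial

variable {R : Type*}

theorem sum_range_mul_pow_mul_pow_choose [CommSemiring R] (x y : R) (n : ℕ) :
    ∑ k ∈ range (n + 1), (k : R) * (x ^ k * y ^ (n - k) * n.choose k) =
      n * x * (x + y) ^ (n - 1) := by
  cases n with
  | zero => simp
  | succ n =>
    have hterm : ∀ k ∈ range (n + 1),
        ((k + 1 : ℕ) : R) * (x ^ (k + 1) * y ^ (n + 1 - (k + 1)) * (n + 1).choose (k + 1)) =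
          (n + 1 : R) * x * (x ^ k * y ^ (n - k) * n.choose k) := by
      intro k _
      have hchoose : ((n + 1).choose (k + 1) : R) * (k + 1) = (n + 1) * (n.choose k : R) := by
        exact_mod_cast congrArg (Nat.cast (R := R)) (Nat.add_one_mul_choose_eq n k).symm
      calc _ = x * (x ^ k * y ^ (n - k)) * (((n + 1).choose (k + 1) : R) * (k + 1)) := by
            rw [Nat.add_sub_add_right]; push_cast; ring
        _ = _ := by rw [hchoose]; ring
    rw [sum_range_succ', sum_congr rfl hterm, ← mul_sum, ← add_pow]
    simp

theorem sum_range_sub_mul_pow_mul_pow_choose [CommRing R] (x y : R) (n : ℕ) :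
    ∑ k ∈ range (n + 1), ((n : R) - k) * (x ^ k * y ^ (n - k) * n.choose k) =
      n * y * (x + y) ^ (n - 1) := by
  simp only [sub_mul, sum_sub_distrib, ← mul_sum, ← add_pow,
    sum_range_mul_pow_mul_pow_choose]
  cases n with
  | zero => simp
  | succ n => simp only [Nat.add_sub_cancel, pow_succ]; ring

end Binomial

theorem tripartite_double_sum_cleared {R : Type*} [CommRing R] (m n : ℕ) (p : R) :
    ∑ l ∈ range (m + 1), ∑ k ∈ range (n + 1),
        (m.choose l : R) * n.choose k * (n : R) ^ (m - l) * (m : R) ^ (n - k) *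
          ((k : R) * m + n * l - k * l) * p ^ (l + k) =
      m * n * p * (m + p) ^ (n - 1) * (n + p) ^ (m - 1) * (m + n + p) := by
  have hsplit : ∀ l k : ℕ,
      (m.choose l : R) * n.choose k * (n : R) ^ (m - l) * (m : R) ^ (n - k) *
          ((k : R) * m + n * l - k * l) * p ^ (l + k) =
        ((m : R) - l) * (p ^ l * (n : R) ^ (m - l) * m.choose l) *
            ((k : R) * (p ^ k * (m : R) ^ (n - k) * n.choose k)) +
          (l : R) * (p ^ l * (n : R) ^ (m - l) * m.choose l) *
            ((n : R) * (p ^ k * (m : R) ^ (n - k) * n.choose k)) := by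
    intro l k
    rw [pow_add]
    ring
  simp only [hsplit, sum_add_distrib]
  rw [← sum_mul_sum, ← sum_mul_sum, ← mul_sum, ← add_pow, sum_range_sub_mul_pow_mul_pow_choose,
    sum_range_mul_pow_mul_pow_choose, sum_range_mul_pow_mul_pow_choose]
  cases n with
  | zero => simp
  | succ n => simp only [Nat.add_sub_cancel, pow_succ]; ring

theorem zpow_natCast_sub_natCast_sub_one {G₀ : Type*} [GroupWithZero G₀] {a : G₀} (ha : a ≠ 0)
    {i j : ℕ} (hji : j ≤ i) : a ^ ((i : ℤ) - j - 1) = a ^ (i - j) * a⁻¹ := by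
  rw [← Nat.cast_sub hji, zpow_sub_one₀ ha, zpow_natCast]

open Finset in
/-- The double-sum identity, over the reals, used in the enumeration of spanning trees of
the complete tripartite graph `K_{m,n,p}`:
`∑_{l=0}^{m} ∑_{k=0}^{n} C(m,l) C(n,k) n^(m-l-1) m^(n-k-1) (km+nl-kl) p^(l+k-1)
  = (m+p)^(n-1) (n+p)^(m-1) (m+n+p)`. -/
theorem tripartite_double_sum_identity (m n p : ℕ) (hm : 0 < m) (hn : 0 < n) (hp : 0 < p) :
    ∑ l ∈ range (m + 1), ∑ k ∈ range (n + 1),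
        (m.choose l : ℝ) * (n.choose k : ℝ) *
          (n : ℝ) ^ ((m : ℤ) - l - 1) * (m : ℝ) ^ ((n : ℤ) - k - 1) *
          ((k : ℝ) * m + (n : ℝ) * l - (k : ℝ) * l) * (p : ℝ) ^ ((l : ℤ) + k - 1) =
      ((m : ℝ) + p) ^ (n - 1) * ((n : ℝ) + p) ^ (m - 1) * ((m : ℝ) + n + p) := by
  have hm0 : (m : ℝ) ≠ 0 := by positivity
  have hn0 : (n : ℝ) ≠ 0 := by positivity
  have hp0 : (p : ℝ) ≠ 0 := by positivity
  have hsummand : ∀ l ∈ range (m + 1), ∀ k ∈ range (n + 1),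
      (m.choose l : ℝ) * (n.choose k : ℝ) *
          (n : ℝ) ^ ((m : ℤ) - l - 1) * (m : ℝ) ^ ((n : ℤ) - k - 1) *
          ((k : ℝ) * m + (n : ℝ) * l - (k : ℝ) * l) * (p : ℝ) ^ ((l : ℤ) + k - 1) =
        (m.choose l : ℝ) * n.choose k * (n : ℝ) ^ (m - l) * (m : ℝ) ^ (n - k) *
            ((k : ℝ) * m + n * l - k * l) * (p : ℝ) ^ (l + k) * ((m : ℝ) * n * p)⁻¹ := by
    intro l hl k hk
    rw [zpow_natCast_sub_natCast_sub_one hn0 (mem_range_succ_iff.mp hl),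
      zpow_natCast_sub_natCast_sub_one hm0 (mem_range_succ_iff.mp hk),
      ← Nat.cast_add, zpow_sub_one₀ hp0, zpow_natCast]
    ring
  simp only [sum_congr rfl fun l hl => sum_congr rfl (hsummand l hl), ← sum_mul,
    tripartite_double_sum_cleared]
  field_simp
end

section
/- Let m, n, p be positive integers. Then, as real numbers, the triple sum ∑_{l=0}^{m} ∑_{k=0}^{n} ∑_{r=0}^{p} C(m,l) · C(n,k) · C(p,r) · n^{m-l-1} · m^{n-k-1} · (km + ln - lk) · (m+n)^{p-r} · (r+1) · (p+1)^{l+k-1} equals (m+n+1)^{p-1} · (m+p+1)^{n-1} · (n+p+1)^{m-1} · (m+n+p+1)^2, where the exponents m-l-1, n-k-1 and l+k-1 are integer exponents (possibly equal to -1) and C(a,b) denotes the binomial coefficient. -/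
/-!
Pulling out the common factor `(n m (p + 1))⁻¹` clears the integer exponents, and the summand
becomes `a l * b k * (k m + l n - l k) * c r` with the binomial weights
`a l = C(m,l) (p+1)^l n^(m-l)`, `b k = C(n,k) (p+1)^k m^(n-k)` and `c r = C(p,r) (m+n)^(p-r) (r+1)`.
Since `k m + l n - l k` is a combination of `k`, `l` and `l k`, the double sum over `l, k` splits
into products of the binomial sums `∑ C(N,k) x^k y^(N-k) = (x+y)^N` and
`∑ k C(N,k) x^k y^(N-k) = N x (x+y)^(N-1)`; so does the sum over `r`. What is left is an identity
of polynomials in `m, n, p` and the powers `(m+n+1)^(p-1)`, `(m+p+1)^(n-1)`, `(n+p+1)^(m-1)`.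
-/

open Finset

section Binomial

variable {R : Type*} [CommSemiring R]

theorem sum_range_mul_pow_mul_pow_mul_choose (x y : R) (N : ℕ) :
    ∑ k ∈ range (N + 1), (k : R) * (x ^ k * y ^ (N - k) * N.choose k) =
      N * x * (x + y) ^ (N - 1) := by
  cases N with
  | zero => simp
  | succ M =>
    rw [sum_range_succ', Nat.cast_zero, zero_mul, add_zero, Nat.add_sub_cancel, add_pow, mul_sum]
    refine sum_congr rfl fun i _ => ?_
    have hchoose :
        ((i + 1 : ℕ) : R) * ((M + 1).choose (i + 1) : ℕ) = (M + 1 : ℕ) * M.choose i := by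
      rw [← Nat.cast_mul, ← Nat.cast_mul, mul_comm, ← Nat.add_one_mul_choose_eq]
    calc ((i + 1 : ℕ) : R) * (x ^ (i + 1) * y ^ (M + 1 - (i + 1)) * ((M + 1).choose (i + 1) : ℕ))
        = ((i + 1 : ℕ) : R) * ((M + 1).choose (i + 1) : ℕ) * (x * x ^ i * y ^ (M - i)) := by
          rw [Nat.add_sub_add_right]; ring
      _ = _ := by rw [hchoose]; ring

theorem sum_range_choose_mul_pow_mul_add_one (s : R) (p : ℕ) :
    ∑ r ∈ range (p + 1), (p.choose r : R) * s ^ (p - r) * (r + 1) =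
      (1 + s) ^ p + p * (1 + s) ^ (p - 1) := by
  have hsplit : ∀ r, (p.choose r : R) * s ^ (p - r) * (r + 1) =
      1 ^ r * s ^ (p - r) * p.choose r + r * (1 ^ r * s ^ (p - r) * p.choose r) := by
    intro r; ring
  rw [sum_congr rfl fun r _ => hsplit r, sum_add_distrib, ← add_pow,
    sum_range_mul_pow_mul_pow_mul_choose, mul_one]

end Binomial

theorem sum_sum_mul_mul_cross_weight {R : Type*} [CommRing R] (s t : Finset ℕ) (a b : ℕ → R)
    (α β : R) :
    ∑ l ∈ s, ∑ k ∈ t, a l * b k * (k * α + l * β - l * k) =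
      α * (∑ l ∈ s, a l) * ∑ k ∈ t, k * b k + β * (∑ l ∈ s, l * a l) * ∑ k ∈ t, b k -
        (∑ l ∈ s, l * a l) * ∑ k ∈ t, k * b k := by
  rw [mul_sum s _ α, mul_sum s _ β, sum_mul_sum, sum_mul_sum, sum_mul_sum]
  simp only [← sum_add_distrib, ← sum_sub_distrib]
  exact sum_congr rfl fun l _ => sum_congr rfl fun k _ => by ring

section IntegerExponents

variable {G : Type*} [GroupWithZero G] {x : G}

theorem zpow_natCast_sub_natCast_sub_one_s7 (hx : x ≠ 0) {N l : ℕ} (hl : l ≤ N) :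
    x ^ ((N : ℤ) - l - 1) = x ^ (N - l) * x⁻¹ := by
  rw [← Nat.cast_sub hl, zpow_sub_one₀ hx, zpow_natCast]

theorem zpow_natCast_add_natCast_sub_one (hx : x ≠ 0) (l k : ℕ) :
    x ^ ((l : ℤ) + k - 1) = x ^ l * x ^ k * x⁻¹ := by
  rw [← Nat.cast_add, zpow_sub_one₀ hx, zpow_natCast, pow_add]

end IntegerExponents

/-- The triple-sum identity, over the reals, used in the enumeration of all rooted
spanning forests of the complete tripartite graph `K_{m,n,p}`:
`∑_{l=0}^{m} ∑_{k=0}^{n} ∑_{r=0}^{p} C(m,l) C(n,k) C(p,r) n^(m-l-1) m^(n-k-1) (km+ln-lk)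
    (m+n)^(p-r) (r+1) (p+1)^(l+k-1)
  = (m+n+1)^(p-1) (m+p+1)^(n-1) (n+p+1)^(m-1) (m+n+p+1)^2`. -/
theorem tripartite_triple_sum_identity (m n p : ℕ) (hm : 0 < m) (hn : 0 < n) (hp : 0 < p) :
    ∑ l ∈ range (m + 1), ∑ k ∈ range (n + 1), ∑ r ∈ range (p + 1),
        (m.choose l : ℝ) * (n.choose k : ℝ) * (p.choose r : ℝ) *
          (n : ℝ) ^ ((m : ℤ) - l - 1) * (m : ℝ) ^ ((n : ℤ) - k - 1) *
          ((k : ℝ) * m + (l : ℝ) * n - (l : ℝ) * k) *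
          ((m : ℝ) + n) ^ (p - r) * ((r : ℝ) + 1) * ((p : ℝ) + 1) ^ ((l : ℤ) + k - 1) =
      ((m : ℝ) + n + 1) ^ (p - 1) * ((m : ℝ) + p + 1) ^ (n - 1) *
        ((n : ℝ) + p + 1) ^ (m - 1) * ((m : ℝ) + n + p + 1) ^ 2 := by
  set x : ℝ := p + 1
  have hx : x ≠ 0 := by positivity
  have hm₀ : (m : ℝ) ≠ 0 := by positivity
  have hn₀ : (n : ℝ) ≠ 0 := by positivity
  calc _ = (∑ l ∈ range (m + 1), ∑ k ∈ range (n + 1),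
          x ^ l * (n : ℝ) ^ (m - l) * m.choose l * (x ^ k * (m : ℝ) ^ (n - k) * n.choose k) *
            (k * m + l * n - l * k)) *
        ∑ r ∈ range (p + 1), (p.choose r : ℝ) * (m + n) ^ (p - r) * (r + 1) * (n * m * x)⁻¹ := by
        rw [sum_mul]; refine sum_congr rfl fun l hl => ?_
        rw [sum_mul]; refine sum_congr rfl fun k hk => ?_
        rw [mul_sum]; refine sum_congr rfl fun r _ => ?_
        rw [zpow_natCast_sub_natCast_sub_one_s7 hn₀ (mem_range_succ_iff.mp hl),
          zpow_natCast_sub_natCast_sub_one_s7 hm₀ (mem_range_succ_iff.mp hk),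
          zpow_natCast_add_natCast_sub_one hx, mul_inv, mul_inv]
        ring
    _ = (m * (x + n) ^ m * (n * x * (x + m) ^ (n - 1)) +
          n * (m * x * (x + n) ^ (m - 1)) * (x + m) ^ n -
          m * x * (x + n) ^ (m - 1) * (n * x * (x + m) ^ (n - 1))) *
        (((1 + (m + n)) ^ p + p * (1 + (m + n)) ^ (p - 1)) * (n * m * x)⁻¹) := by
        rw [sum_sum_mul_mul_cross_weight, ← add_pow, ← add_pow,
          sum_range_mul_pow_mul_pow_mul_choose, sum_range_mul_pow_mul_pow_mul_choose, ← sum_mul,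
          sum_range_choose_mul_pow_mul_add_one]
    _ = _ := by
        rw [← pow_sub_one_mul hm.ne' (x + n), ← pow_sub_one_mul hn.ne' (x + m),
          ← pow_sub_one_mul hp.ne' (1 + ((m : ℝ) + n))]
        field_simp
        ring
end
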